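/- arXiv:1412.3309 — 3 statements merged into one kernel-verified Lean document; each statement's English description precedes it below -/
import Mathlib

section
/- Let n and s be positive integers. Then μ(n) = s if and only if there exists exactly one s-tuple of integers (d_1, …, d_s) satisfying d_1 > d_2 > … > d_{s−1} ≥ d_s > 0 and n = 2^{d_1} + 2^{d_2} + … + 2^{d_s} − s. -/
/-!
Write `s₂(x)` for the number of binary digits `1` of `x`. If `n` is a sum of `r` numbers
`2^d - 1` with `d > 0`, then `n + r` is a sum of `r` powers of two, so `s₂(n + r) ≤ r`. Since
`s₂(x + 1) ≤ s₂(x) + 1` this condition is monotone in `r`, and at the least `r` satisfying it a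
representation can be built; so `μ(n)` is that least `r`, and `μ(n) = s` iff
`s₂(n + s) ≤ s ≤ s₂(n + s - 1)`.

A tuple `d_1 > ⋯ > d_{s-1} ≥ d_s > 0` with `n + s = ∑ 2^{d_i}` is the same as a splitting of the
binary digits of `n + s - 1 = 2^{d_1} + ⋯ + 2^{d_{s-1}} + (2^{d_s} - 1)` into `s - 1` digits above a
lowest block `0, …, d_s - 1` of ones. Counting digits determines `d_s`, so the tuple is unique, and
it exists exactly when `s₂(n + s) ≤ s ≤ s₂(n + s - 1)`.
-/

/-- `μ(n)`: the smallest `r` such that `n` can be written as a sum of `r` numbers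
of the form `2^d - 1` with `d > 0`. -/
noncomputable def muNat (n : ℕ) : ℕ :=
  sInf {r : ℕ | ∃ d : Fin r → ℕ, (∀ i, 0 < d i) ∧ n = ∑ i, (2 ^ d i - 1)}

open Finset

def bitCount (n : ℕ) : ℕ := #n.bitIndices.toFinset

lemma bitCount_sum_two_pow (B : Finset ℕ) : bitCount (∑ i ∈ B, 2 ^ i) = #B := by
  simp [bitCount]

lemma bitCount_eq_zero {n : ℕ} : bitCount n = 0 ↔ n = 0 := by
  refine ⟨fun h => ?_, fun h => by simp [h, bitCount]⟩
  rw [← sum_toFinset_bitIndices_two_pow n, card_eq_zero.mp h, sum_empty]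

lemma sum_Ico_two_pow_add {e j : ℕ} (hej : e ≤ j) : ∑ i ∈ Ico e j, 2 ^ i + 2 ^ e = 2 ^ j := by
  induction j, hej using Nat.le_induction with
  | base => simp
  | succ j hej ih => rw [sum_Ico_succ_top hej, add_right_comm, ih, pow_succ, mul_two]

lemma exists_Ico_subset_notMem (B : Finset ℕ) (e : ℕ) : ∃ j, e ≤ j ∧ Ico e j ⊆ B ∧ j ∉ B := by
  classical
  have h : ∃ j, e ≤ j ∧ j ∉ B := by
    obtain ⟨j, hj⟩ := Infinite.exists_notMem_finset (B ∪ range e)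
    simp only [mem_union, mem_range, not_or, not_lt] at hj
    exact ⟨j, hj.2, hj.1⟩
  refine ⟨Nat.find h, (Nat.find_spec h).1, fun i hi => ?_, (Nat.find_spec h).2⟩
  rw [mem_Ico] at hi
  by_contra hiB
  exact Nat.find_min h hi.2 ⟨hi.1, hiB⟩

/-- Binary carry: adding `2 ^ e` clears the digits `e, …, j - 1` and sets digit `j`. -/
lemma bitCount_sum_two_pow_add_two_pow {B : Finset ℕ} {e j : ℕ} (hej : e ≤ j)
    (hsub : Ico e j ⊆ B) (hj : j ∉ B) :
    bitCount (∑ i ∈ B, 2 ^ i + 2 ^ e) + (j - e) = #B + 1 := by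
  have hsum : ∑ i ∈ B, 2 ^ i + 2 ^ e = ∑ i ∈ insert j (B \ Ico e j), 2 ^ i := by
    rw [sum_insert (fun h => hj (mem_sdiff.mp h).1), ← sum_sdiff hsub, add_assoc,
      sum_Ico_two_pow_add hej, add_comm]
  rw [hsum, bitCount_sum_two_pow, card_insert_of_notMem (fun h => hj (mem_sdiff.mp h).1),
    card_sdiff_of_subset hsub, Nat.card_Ico]
  have : j - e ≤ #B := by simpa using card_le_card hsub
  omega

lemma bitCount_add_two_pow_le (n e : ℕ) : bitCount (n + 2 ^ e) ≤ bitCount n + 1 := by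
  obtain ⟨j, hej, hsub, hj⟩ := exists_Ico_subset_notMem n.bitIndices.toFinset e
  have := bitCount_sum_two_pow_add_two_pow hej hsub hj
  rw [sum_toFinset_bitIndices_two_pow] at this
  exact (Nat.le_add_right _ _).trans this.le

lemma bitCount_sum_two_pow_le {ι : Type*} (s : Finset ι) (f : ι → ℕ) :
    bitCount (∑ i ∈ s, 2 ^ f i) ≤ #s := by
  classical
  induction s using Finset.induction_on with
  | empty => simp [bitCount]
  | insert a s ha ih =>
    rw [sum_insert ha, card_insert_of_notMem ha, add_comm]
    exact (bitCount_add_two_pow_le _ _).trans (by omega)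

lemma range_subset_of_bitCount_sum_two_pow_add_one {B : Finset ℕ} {a : ℕ}
    (h : bitCount (∑ i ∈ B, 2 ^ i + 1) + a ≤ #B + 1) : range a ⊆ B := by
  obtain ⟨j, -, hsub, hj⟩ := exists_Ico_subset_notMem B 0
  have := bitCount_sum_two_pow_add_two_pow (Nat.zero_le j) hsub hj
  rw [pow_zero, Nat.sub_zero] at this
  rw [range_eq_Ico]
  exact (Ico_subset_Ico_right (by omega)).trans hsub

lemma bitCount_add_le_of_le {n r r' : ℕ} (h : bitCount (n + r) ≤ r) (hr : r ≤ r') :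
    bitCount (n + r') ≤ r' := by
  induction r', hr using Nat.le_induction with
  | base => exact h
  | succ k _ ih =>
    rw [← add_assoc]
    simpa using (bitCount_add_two_pow_le (n + k) 0).trans (by omega)

section SplitTuple

variable {t a : ℕ} {e : Fin t → ℕ}

lemma disjoint_image_range (ha : ∀ i, a ≤ e i) : Disjoint (univ.image e) (range a) := by
  simp only [disjoint_left, mem_image, mem_univ, true_and, mem_range, not_lt]
  rintro _ ⟨i, rfl⟩
  exact ha i

lemma card_image_union_range (he : StrictAnti e) (ha : ∀ i, a ≤ e i) :
    #(univ.image e ∪ range a) = t + a := by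
  rw [card_union_of_disjoint (disjoint_image_range ha), card_image_of_injective _ he.injective,
    card_univ, Fintype.card_fin, card_range]

lemma sum_two_pow_add_two_pow_eq (he : StrictAnti e) (ha : ∀ i, a ≤ e i) :
    ∑ i, 2 ^ e i + 2 ^ a = ∑ k ∈ univ.image e ∪ range a, 2 ^ k + 1 := by
  rw [sum_union (disjoint_image_range ha), sum_image fun i _ j _ h => he.injective h,
    add_assoc, Nat.geomSum_eq le_rfl]
  have := Nat.one_le_two_pow (n := a)
  omega

lemma eq_of_sum_two_pow_add_two_pow_eq {e' : Fin t → ℕ} {a' : ℕ} (he : StrictAnti e)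
    (ha : ∀ i, a ≤ e i) (he' : StrictAnti e') (ha' : ∀ i, a' ≤ e' i)
    (h : ∑ i, 2 ^ e i + 2 ^ a = ∑ i, 2 ^ e' i + 2 ^ a') : e = e' ∧ a = a' := by
  rw [sum_two_pow_add_two_pow_eq he ha, sum_two_pow_add_two_pow_eq he' ha', add_left_inj] at h
  have hB := geomSum_injective le_rfl h
  have haa' : a = a' := by
    have := congrArg card hB
    rw [card_image_union_range he ha, card_image_union_range he' ha'] at this
    omega
  subst haa'
  refine ⟨(he.range_inj he').mp ?_, rfl⟩
  have himage := congrArg (· \ range a) hB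
  simp only [union_sdiff_cancel_right (disjoint_image_range ha),
    union_sdiff_cancel_right (disjoint_image_range ha')] at himage
  rw [← Set.image_univ, ← Set.image_univ, ← coe_univ, ← coe_image, ← coe_image, himage]

end SplitTuple

lemma exists_strictAnti_image_eq {α : Type*} [LinearOrder α] {T : Finset α} {t : ℕ}
    (hT : #T = t) : ∃ e : Fin t → α, StrictAnti e ∧ univ.image e = T := by
  refine ⟨T.orderEmbOfFin hT ∘ Fin.rev, (T.orderEmbOfFin hT).strictMono.comp_strictAnti
    Fin.rev_strictAnti, ?_⟩
  rw [← image_image, image_univ_of_surjective Fin.rev_surjective, image_orderEmbOfFin_univ]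

def IsNormalRep {s : ℕ} (m : ℕ) (d : Fin s → ℕ) : Prop :=
  (∀ i j : Fin s, i < j → (j : ℕ) + 1 < s → d j < d i) ∧
  (∀ i j : Fin s, i < j → d j ≤ d i) ∧
  (∀ i, 0 < d i) ∧
  m = ∑ i, 2 ^ d i

lemma isNormalRep_iff {t m : ℕ} {d : Fin (t + 1) → ℕ} :
    IsNormalRep m d ↔ StrictAnti (Fin.init d) ∧ (∀ i, d (Fin.last t) ≤ Fin.init d i) ∧
      0 < d (Fin.last t) ∧ m = ∑ i, 2 ^ Fin.init d i + 2 ^ d (Fin.last t) := by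
  simp only [IsNormalRep, Fin.sum_univ_castSucc, Fin.init]
  constructor
  · rintro ⟨hstrict, hanti, hpos, hm⟩
    refine ⟨fun i j hij => hstrict _ _ (Fin.castSucc_lt_castSucc_iff.mpr hij) (by simp),
      fun i => hanti _ _ (Fin.castSucc_lt_last i), hpos _, hm⟩
  · rintro ⟨hstrict, hlast, hpos, hm⟩
    have hle : ∀ i, d (Fin.last t) ≤ d i := Fin.lastCases le_rfl hlast
    refine ⟨fun i j hij hj => ?_, fun i j hij => ?_, fun i => hpos.trans_le (hle i), hm⟩ <;>
      obtain ⟨i, rfl⟩ := Fin.exists_castSucc_eq.mpr (Fin.ne_last_of_lt hij)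
    · obtain ⟨j, rfl⟩ := (Fin.exists_castSucc_eq (i := j)).mpr fun h => by simp [h] at hj
      exact hstrict (Fin.castSucc_lt_castSucc_iff.mp hij)
    · induction j using Fin.lastCases with
      | last => exact hlast i
      | cast j => exact (hstrict (Fin.castSucc_lt_castSucc_iff.mp hij)).le

section NormalRep

variable {t m : ℕ}

lemma IsNormalRep.bitCount_le {s : ℕ} {d : Fin s → ℕ} (h : IsNormalRep m d) :
    bitCount m ≤ s := by
  simpa [← h.2.2.2] using bitCount_sum_two_pow_le univ d

lemma IsNormalRep.le_bitCount {d : Fin (t + 1) → ℕ} (h : IsNormalRep (m + 1) d) :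
    t + 1 ≤ bitCount m := by
  obtain ⟨he, ha, hpos, hm⟩ := isNormalRep_iff.mp h
  rw [sum_two_pow_add_two_pow_eq he ha, add_left_inj] at hm
  rw [hm, bitCount_sum_two_pow, card_image_union_range he ha]
  omega

lemma IsNormalRep.unique {d d' : Fin (t + 1) → ℕ} (h : IsNormalRep m d)
    (h' : IsNormalRep m d') : d = d' := by
  obtain ⟨he, ha, -, hm⟩ := isNormalRep_iff.mp h
  obtain ⟨he', ha', -, hm'⟩ := isNormalRep_iff.mp h'
  obtain ⟨hinit, hlast⟩ := eq_of_sum_two_pow_add_two_pow_eq he ha he' ha' (hm.symm.trans hm')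
  rw [← Fin.snoc_init_self d, ← Fin.snoc_init_self d', hinit, hlast]

/-- The last entry is `a = bitCount m - t`; the bound on `bitCount (m + 1)` says that the digits
`0, …, a - 1` of `m` are all `1`, and the other entries enumerate the remaining digits. -/
lemma exists_isNormalRep (h : bitCount (m + 1) ≤ t + 1) (h' : t + 1 ≤ bitCount m) :
    ∃ d : Fin (t + 1) → ℕ, IsNormalRep (m + 1) d := by
  set B := m.bitIndices.toFinset
  have hB : ∑ i ∈ B, 2 ^ i = m := sum_toFinset_bitIndices_two_pow m
  have hcard : #B = bitCount m := rfl
  have hsub : range (#B - t) ⊆ B :=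
    range_subset_of_bitCount_sum_two_pow_add_one (by rw [hB]; omega)
  obtain ⟨e, he, himage⟩ := exists_strictAnti_image_eq (t := t) (T := B \ range (#B - t))
    (by rw [card_sdiff_of_subset hsub, card_range]; omega)
  have ha : ∀ i, #B - t ≤ e i := fun i => by
    have : e i ∈ B \ range (#B - t) := himage ▸ mem_image_of_mem e (mem_univ i)
    simpa using (mem_sdiff.mp this).2
  refine ⟨Fin.snoc e (#B - t), isNormalRep_iff.mpr ?_⟩
  simp only [Fin.init_snoc, Fin.snoc_last]
  refine ⟨he, ha, by omega, ?_⟩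
  rw [sum_two_pow_add_two_pow_eq he ha, himage, sdiff_union_of_subset hsub, hB]

theorem existsUnique_isNormalRep_iff :
    (∃! d : Fin (t + 1) → ℕ, IsNormalRep (m + 1) d) ↔
      bitCount (m + 1) ≤ t + 1 ∧ t + 1 ≤ bitCount m := by
  refine ⟨fun ⟨d, hd, _⟩ => ⟨hd.bitCount_le, hd.le_bitCount⟩, fun ⟨h, h'⟩ => ?_⟩
  obtain ⟨d, hd⟩ := exists_isNormalRep h h'
  exact ⟨d, hd, fun d' hd' => hd'.unique hd⟩

end NormalRep

lemma sum_two_pow_sub_one_add_card {ι : Type*} (s : Finset ι) (f : ι → ℕ) :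
    ∑ i ∈ s, (2 ^ f i - 1) + #s = ∑ i ∈ s, 2 ^ f i := by
  rw [card_eq_sum_ones, ← sum_add_distrib]
  exact sum_congr rfl fun i _ => Nat.sub_add_cancel Nat.one_le_two_pow

lemma bitCount_add_le_of_eq_sum {n r : ℕ} {d : Fin r → ℕ} (h : n = ∑ i, (2 ^ d i - 1)) :
    bitCount (n + r) ≤ r := by
  have := sum_two_pow_sub_one_add_card univ d
  rw [card_univ, Fintype.card_fin, ← h] at this
  simpa [this] using bitCount_sum_two_pow_le univ d

lemma IsNormalRep.eq_sum_two_pow_sub_one {n r : ℕ} {d : Fin r → ℕ} (h : IsNormalRep (n + r) d) :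
    n = ∑ i, (2 ^ d i - 1) := by
  have := sum_two_pow_sub_one_add_card univ d
  rw [card_univ, Fintype.card_fin, ← h.2.2.2] at this
  omega

lemma exists_eq_sum_muNat (n : ℕ) :
    ∃ d : Fin (muNat n) → ℕ, (∀ i, 0 < d i) ∧ n = ∑ i, (2 ^ d i - 1) :=
  Nat.sInf_mem (s := {r | ∃ d : Fin r → ℕ, (∀ i, 0 < d i) ∧ n = ∑ i, (2 ^ d i - 1)})
    ⟨n, fun _ => 1, fun _ => one_pos, by simp⟩

lemma bitCount_add_muNat_le (n : ℕ) : bitCount (n + muNat n) ≤ muNat n :=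
  let ⟨_, _, h⟩ := exists_eq_sum_muNat n
  bitCount_add_le_of_eq_sum h

lemma isLeast_muNat {n : ℕ} (hn : 0 < n) :
    IsLeast {r | bitCount (n + r) ≤ r} (muNat n) := by
  refine ⟨bitCount_add_muNat_le n, fun r hr => ?_⟩
  induction r with
  | zero => simp [bitCount_eq_zero, hn.ne'] at hr
  | succ r ih =>
    by_cases hprev : bitCount (n + r) ≤ r
    · exact (ih hprev).trans r.le_succ
    · obtain ⟨d, hd⟩ := exists_isNormalRep hr (not_le.mp hprev)
      exact Nat.sInf_le ⟨d, hd.2.2.1, hd.eq_sum_two_pow_sub_one⟩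

lemma muNat_eq_add_one_iff {n t : ℕ} (hn : 0 < n) :
    muNat n = t + 1 ↔ bitCount (n + (t + 1)) ≤ t + 1 ∧ t + 1 ≤ bitCount (n + t) := by
  refine ⟨fun h => ⟨h ▸ (isLeast_muNat hn).1, ?_⟩, fun ⟨h, h'⟩ => ?_⟩
  · by_contra! ht
    have := (isLeast_muNat hn).2 (Nat.le_of_lt_succ ht)
    omega
  · refine (isLeast_muNat hn).unique ⟨h, fun r hr => ?_⟩
    by_contra! hrt
    exact (bitCount_add_le_of_le hr (Nat.le_of_lt_succ hrt)).not_gt h'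

/-- `μ(n) = s` iff there exists exactly one `s`-tuple `(d_1, …, d_s)` with
`d_1 > d_2 > … > d_{s-1} ≥ d_s > 0` and `n = 2^{d_1} + … + 2^{d_s} - s`. -/
theorem stmt0 (n s : ℕ) (hn : 0 < n) (hs : 0 < s) :
    muNat n = s ↔
      ∃! d : Fin s → ℕ,
        (∀ i j : Fin s, i < j → (j : ℕ) + 1 < s → d j < d i) ∧
        (∀ i j : Fin s, i < j → d j ≤ d i) ∧
        (∀ i, 0 < d i) ∧
        n + s = ∑ i, 2 ^ d i := by
  obtain ⟨t, rfl⟩ := Nat.exists_eq_add_one_of_ne_zero hs.ne'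
  rw [muNat_eq_add_one_iff hn]
  exact existsUnique_isNormalRep_iff.symm
end

section
/- For every nonnegative integer t and every polynomial f in P_k one has Sq̃(Sq^{2t}(f)) = Sq^t(Sq̃(f)) and Sq̃(Sq^{2t+1}(f)) = 0. Consequently Sq̃ carries hit polynomials to hit polynomials and maps (P_k)_{2m+k} into (P_k)_m for every m ≥ 0, and hence induces an F_2-linear map Sq̃^0_* : (QP_k)_{2m+k} → (QP_k)_m (Kameko's homomorphism). -/
open MvPolynomial

/-- The total Steenrod square on `P_k = F_2[x_1,…,x_k]`, the algebra map with
`Sq(x_j) = x_j + x_j^2`. -/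
noncomputable def SqTotal (k : ℕ) :
    MvPolynomial (Fin k) (ZMod 2) →ₐ[ZMod 2] MvPolynomial (Fin k) (ZMod 2) :=
  aeval fun j => X j + X j ^ 2

/-- The Steenrod square `Sq^i : P_k → P_k`, sending a homogeneous polynomial `f` of
degree `d` to the degree-`d + i` homogeneous component of `Sq(f)`, extended additively. -/
noncomputable def SqOp (k i : ℕ) (f : MvPolynomial (Fin k) (ZMod 2)) :
    MvPolynomial (Fin k) (ZMod 2) :=
  ∑ d ∈ Finset.range (f.totalDegree + 1),
    homogeneousComponent (d + i) (SqTotal k (homogeneousComponent d f))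

/-- The space of hit polynomials: finite sums of `Sq^i (f_i)` with `i > 0`. -/
noncomputable def hitSubmodule (k : ℕ) :
    Submodule (ZMod 2) (MvPolynomial (Fin k) (ZMod 2)) :=
  Submodule.span (ZMod 2) {g | ∃ i f, 0 < i ∧ g = SqOp k i f}

/-- A polynomial is hit if it is a finite sum of `Sq^i (f_i)` with `i > 0`. -/
def IsHit (k : ℕ) (f : MvPolynomial (Fin k) (ZMod 2)) : Prop := f ∈ hitSubmodule k

/-- `(QP_k)_n`: the space of homogeneous polynomials of degree `n` modulo hit polynomials. -/
abbrev QP (k n : ℕ) :=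
  ↥(homogeneousSubmodule (Fin k) (ZMod 2) n) ⧸
    ((hitSubmodule k).comap (homogeneousSubmodule (Fin k) (ZMod 2) n).subtype)

/-- Kameko's map `Sq̃ : P_k → P_k`, defined on monomials by `Sq̃(x) = y` if
`x = x_1 x_2 ⋯ x_k · y^2` for a monomial `y`, and `Sq̃(x) = 0` otherwise,
extended linearly. -/
noncomputable def kamekoFun (k : ℕ) (f : MvPolynomial (Fin k) (ZMod 2)) :
    MvPolynomial (Fin k) (ZMod 2) :=
  ∑ a ∈ f.support,
    if ∀ j, Odd (a j) then
      monomial (Finsupp.mapRange (fun t => (t - 1) / 2) (by norm_num) a) (f.coeff a)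
    else 0


/-!
`Sq̃` is semilinear over squares, `Sq̃(p·q²) = Sq̃(p)·q`, and `Sq` is an algebra map, so writing
a monomial as `x^ε·y²` with `ε` squarefree reduces `Sq̃ ∘ Sq = Sq ∘ Sq̃` to squarefree monomials.
For `x_1⋯x_k` both sides are `1`; any other squarefree monomial misses a variable, and so does
its image under `Sq`, so `Sq̃` kills both. Since `Sq̃` takes degree `2m + k` to degree `m` and
kills every degree not of this form, comparing homogeneous components of `Sq̃ ∘ Sq = Sq ∘ Sq̃`
gives `Sq̃ Sq^{2t} = Sq^t Sq̃` and `Sq̃ Sq^{2t+1} = 0`. Hence `Sq̃` preserves hit polynomials and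
descends to the quotients `QP`.
-/

namespace Kameko

variable {k : ℕ}

noncomputable def kamekoExponent (a : Fin k →₀ ℕ) : Fin k →₀ ℕ :=
  a.mapRange (fun t => (t - 1) / 2) (by norm_num)

lemma kamekoFun_eq_sum (f : MvPolynomial (Fin k) (ZMod 2)) :
    kamekoFun k f = (AddMonoidAlgebra.coeff f).sum fun a c =>
      if ∀ j, Odd (a j) then monomial (kamekoExponent a) c else 0 := by
  rw [sum_def]
  rfl

lemma kamekoFun_monomial (a : Fin k →₀ ℕ) (c : ZMod 2) :
    kamekoFun k (monomial a c) =
      if ∀ j, Odd (a j) then monomial (kamekoExponent a) c else 0 := by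
  rw [kamekoFun_eq_sum, sum_monomial_eq]
  split_ifs <;> simp

lemma kamekoFun_add (f g : MvPolynomial (Fin k) (ZMod 2)) :
    kamekoFun k (f + g) = kamekoFun k f + kamekoFun k g := by
  simp only [kamekoFun_eq_sum]
  exact Finsupp.sum_add_index' (fun _ => by simp) (fun _ _ _ => by split_ifs <;> simp)

noncomputable def kameko (k : ℕ) :
    MvPolynomial (Fin k) (ZMod 2) →ₗ[ZMod 2] MvPolynomial (Fin k) (ZMod 2) :=
  (AddMonoidHom.mk' (kamekoFun k) kamekoFun_add).toZModLinearMap 2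

@[simp] lemma kameko_apply (f : MvPolynomial (Fin k) (ZMod 2)) : kameko k f = kamekoFun k f :=
  rfl

lemma kamekoFun_zero : kamekoFun k 0 = 0 := map_zero (kameko k)

theorem kamekoFun_mul_sq (p q : MvPolynomial (Fin k) (ZMod 2)) :
    kamekoFun k (p * q ^ 2) = kamekoFun k p * q := by
  induction p using MvPolynomial.induction_on' with
  | add p p' hp hp' => rw [add_mul, kamekoFun_add, kamekoFun_add, hp, hp', add_mul]
  | monomial a c =>
    induction q using MvPolynomial.induction_on' with
    | add q q' hq hq' => rw [add_pow_char, mul_add, kamekoFun_add, hq, hq', mul_add]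
    | monomial b d =>
      have hodd : (∀ j, Odd ((a + 2 • b) j)) ↔ ∀ j, Odd (a j) := by
        simp [Nat.odd_add, parity_simps]
      rw [monomial_pow, monomial_mul, kamekoFun_monomial, kamekoFun_monomial]
      by_cases ha : ∀ j, Odd (a j)
      · rw [if_pos (hodd.2 ha), if_pos ha, monomial_mul, ZMod.pow_card]
        congr 2
        ext j
        obtain ⟨r, hr⟩ := ha j
        simp only [kamekoExponent, Finsupp.mapRange_apply, Finsupp.add_apply, Finsupp.smul_apply,
          smul_eq_mul, hr]
        omega
      · rw [if_neg (mt hodd.1 ha), if_neg ha, zero_mul]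

lemma kamekoFun_eq_zero_of_notMem_vars {p : MvPolynomial (Fin k) (ZMod 2)} {j : Fin k}
    (hj : j ∉ p.vars) : kamekoFun k p = 0 :=
  Finset.sum_eq_zero fun a ha => if_neg fun hodd =>
    hj <| (mem_vars_iff_mem_support j).2 ⟨a, ha, Finsupp.mem_support_iff.2 (hodd j).pos.ne'⟩

lemma vars_sqTotal_subset (p : MvPolynomial (Fin k) (ZMod 2)) :
    (SqTotal k p).vars ⊆ p.vars := by
  classical
  intro j hj
  rw [SqTotal, aeval_eq_bind₁] at hj
  obtain ⟨i, hi, hji⟩ := Finset.mem_biUnion.1 (vars_bind₁ _ _ hj)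
  have hvars : (X i + X i ^ 2 : MvPolynomial (Fin k) (ZMod 2)).vars ⊆ {i} :=
    (vars_add_subset _ _).trans <| Finset.union_subset (vars_X (R := ZMod 2)).subset
      ((vars_pow _ _).trans (vars_X (R := ZMod 2)).subset)
  rwa [Finset.mem_singleton.1 (hvars hji)]

lemma prod_X_eq_monomial {σ R : Type*} [Fintype σ] [CommSemiring R] :
    (∏ j, X j : MvPolynomial σ R) = monomial (Finsupp.equivFunOnFinite.symm 1) 1 := by
  rw [← prod_X_pow_eq_monomial]
  simp

lemma kamekoFun_prod_X : kamekoFun k (∏ j, X j) = 1 := by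
  have hexp : kamekoExponent (Finsupp.equivFunOnFinite.symm 1 : Fin k →₀ ℕ) = 0 := by
    ext j
    simp [kamekoExponent]
  rw [prod_X_eq_monomial, kamekoFun_monomial, if_pos (by simp), hexp, monomial_zero', C_1]

/-- Expanding `Sq(x_1⋯x_k) = ∏ (x_j + x_j²)`, every term other than `x_1⋯x_k` is `x_S·y²`
with some `x_j` missing from `x_S`, so `Sq̃` kills it. -/
lemma kamekoFun_sqTotal_prod_X : kamekoFun k (SqTotal k (∏ j, X j)) = 1 := by
  classical
  simp only [map_prod, SqTotal, aeval_X, Fintype.prod_add, ← kameko_apply, map_sum]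
  rw [Finset.sum_eq_single Finset.univ]
  · simp [kamekoFun_prod_X]
  · intro t _ ht
    obtain ⟨j, hj⟩ := not_forall.1 (mt Finset.eq_univ_iff_forall.2 ht)
    have hvars : j ∉ (∏ i ∈ t, X i : MvPolynomial (Fin k) (ZMod 2)).vars := fun h => by
      obtain ⟨i, hi, hji⟩ := Finset.mem_biUnion.1 (vars_prod _ h)
      rw [vars_X, Finset.mem_singleton] at hji
      exact hj (hji ▸ hi)
    rw [kameko_apply, Finset.prod_pow, kamekoFun_mul_sq, kamekoFun_eq_zero_of_notMem_vars hvars,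
      zero_mul]
  · simp

lemma kamekoFun_sqTotal_monomial_of_le_one {ε : Fin k →₀ ℕ} (hε : ∀ j, ε j ≤ 1) :
    kamekoFun k (SqTotal k (monomial ε 1)) = SqTotal k (kamekoFun k (monomial ε 1)) := by
  by_cases hone : ∀ j, ε j = 1
  · obtain rfl : ε = Finsupp.equivFunOnFinite.symm 1 := by
      ext j
      simp [hone j]
    rw [← prod_X_eq_monomial, kamekoFun_sqTotal_prod_X, kamekoFun_prod_X, map_one]
  · obtain ⟨j, hj⟩ := not_forall.1 hone
    have hvars : j ∉ (monomial ε (1 : ZMod 2)).vars := by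
      rw [vars_monomial one_ne_zero, Finsupp.mem_support_iff]
      have := hε j
      omega
    rw [kamekoFun_eq_zero_of_notMem_vars hvars,
      kamekoFun_eq_zero_of_notMem_vars fun h => hvars (vars_sqTotal_subset _ h), map_zero]

theorem kamekoFun_sqTotal (f : MvPolynomial (Fin k) (ZMod 2)) :
    kamekoFun k (SqTotal k f) = SqTotal k (kamekoFun k f) := by
  induction f using MvPolynomial.induction_on' with
  | add p q hp hq => rw [map_add, kamekoFun_add, kamekoFun_add, hp, hq, map_add]
  | monomial a c =>
    set ε := a.mapRange (· % 2) (by simp)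
    set b := a.mapRange (· / 2) (by simp)
    have hsplit : monomial a c = c • (monomial ε 1 * monomial b 1 ^ 2) := by
      rw [monomial_pow, monomial_mul, smul_monomial, smul_eq_mul, one_pow, mul_one, mul_one]
      congr 2
      ext j
      simp only [ε, b, Finsupp.add_apply, Finsupp.smul_apply, Finsupp.mapRange_apply, smul_eq_mul]
      omega
    have hε : ∀ j, ε j ≤ 1 := fun j => by
      simp only [ε, Finsupp.mapRange_apply]
      omega
    simp only [hsplit, ← kameko_apply, map_smul, map_mul, map_pow]
    simp only [kameko_apply, kamekoFun_mul_sq, map_mul, kamekoFun_sqTotal_monomial_of_le_one hε]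

lemma homogeneousComponent_monomial {σ R : Type*} [CommSemiring R] (e : ℕ) (a : σ →₀ ℕ)
    (c : R) :
    homogeneousComponent e (monomial a c) = if e = a.degree then monomial a c else 0 :=
  homogeneousComponent_of_mem (isHomogeneous_monomial c rfl)

lemma degree_eq_two_mul_degree_kamekoExponent_add {a : Fin k →₀ ℕ} (ha : ∀ j, Odd (a j)) :
    a.degree = 2 * (kamekoExponent a).degree + k := by
  simp only [Finsupp.degree_eq_sum, kamekoExponent, Finsupp.mapRange_apply, Finset.mul_sum]
  calc ∑ j, a j = ∑ j : Fin k, (2 * ((a j - 1) / 2) + 1) :=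
        Finset.sum_congr rfl fun j _ => by obtain ⟨r, hr⟩ := ha j; omega
    _ = _ := by simp [Finset.sum_add_distrib]

theorem kamekoFun_homogeneousComponent (m : ℕ) (p : MvPolynomial (Fin k) (ZMod 2)) :
    kamekoFun k (homogeneousComponent (2 * m + k) p) = homogeneousComponent m (kamekoFun k p) := by
  induction p using MvPolynomial.induction_on' with
  | add p q hp hq => rw [map_add, kamekoFun_add, hp, hq, kamekoFun_add, map_add]
  | monomial a c =>
    by_cases ha : ∀ j, Odd (a j)
    · have hdeg := degree_eq_two_mul_degree_kamekoExponent_add ha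
      rw [kamekoFun_monomial, if_pos ha, homogeneousComponent_monomial,
        homogeneousComponent_monomial]
      by_cases hm : m = (kamekoExponent a).degree
      · rw [if_pos (by omega), if_pos hm, kamekoFun_monomial, if_pos ha]
      · rw [if_neg (by omega), if_neg hm, kamekoFun_zero]
    · rw [homogeneousComponent_monomial, kamekoFun_monomial, if_neg ha, map_zero]
      split_ifs
      · rw [kamekoFun_monomial, if_neg ha]
      · exact kamekoFun_zero

theorem kamekoFun_homogeneousComponent_eq_zero {e : ℕ} (he : ∀ m, e ≠ 2 * m + k)
    (p : MvPolynomial (Fin k) (ZMod 2)) : kamekoFun k (homogeneousComponent e p) = 0 := by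
  induction p using MvPolynomial.induction_on' with
  | add p q hp hq => rw [map_add, kamekoFun_add, hp, hq, add_zero]
  | monomial a c =>
    rw [homogeneousComponent_monomial]
    split_ifs with hea
    · rw [kamekoFun_monomial, if_neg fun ha =>
        he _ (hea.trans (degree_eq_two_mul_degree_kamekoExponent_add ha))]
    · exact kamekoFun_zero

theorem isHomogeneous_kamekoFun {m : ℕ} {f : MvPolynomial (Fin k) (ZMod 2)}
    (hf : f.IsHomogeneous (2 * m + k)) : (kamekoFun k f).IsHomogeneous m := by
  rw [← homogeneousComponent_eq_self hf, kamekoFun_homogeneousComponent]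
  exact homogeneousComponent_isHomogeneous _ _

lemma kamekoFun_eq_zero_of_isHomogeneous {n : ℕ} {f : MvPolynomial (Fin k) (ZMod 2)}
    (hf : f.IsHomogeneous n) (hn : ∀ m, n ≠ 2 * m + k) : kamekoFun k f = 0 := by
  rw [← homogeneousComponent_eq_self hf]
  exact kamekoFun_homogeneousComponent_eq_zero hn f

lemma kamekoFun_homogeneousComponent_sqTotal_eq_zero {f : MvPolynomial (Fin k) (ZMod 2)}
    (hf : kamekoFun k f = 0) (e : ℕ) :
    kamekoFun k (homogeneousComponent e (SqTotal k f)) = 0 := by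
  by_cases he : ∃ m, e = 2 * m + k
  · obtain ⟨m, rfl⟩ := he
    rw [kamekoFun_homogeneousComponent, kamekoFun_sqTotal, hf, map_zero, map_zero]
  · exact kamekoFun_homogeneousComponent_eq_zero (not_exists.1 he) _

lemma sqOp_eq_sum_range {f : MvPolynomial (Fin k) (ZMod 2)} {N : ℕ} (hN : f.totalDegree < N)
    (i : ℕ) :
    SqOp k i f = ∑ d ∈ Finset.range N,
      homogeneousComponent (d + i) (SqTotal k (homogeneousComponent d f)) :=
  Finset.sum_subset (Finset.range_subset_range.2 hN) fun d _ hd => by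
    rw [homogeneousComponent_eq_zero d f (by simpa using hd), map_zero, map_zero]

lemma sqOp_add (i : ℕ) (f g : MvPolynomial (Fin k) (ZMod 2)) :
    SqOp k i (f + g) = SqOp k i f + SqOp k i g := by
  let N := max (f + g).totalDegree (max f.totalDegree g.totalDegree) + 1
  rw [sqOp_eq_sum_range (N := N) (by omega), sqOp_eq_sum_range (N := N) (by omega),
    sqOp_eq_sum_range (N := N) (by omega), ← Finset.sum_add_distrib]
  simp only [map_add]

lemma sqOp_of_isHomogeneous {f : MvPolynomial (Fin k) (ZMod 2)} {n : ℕ} (hf : f.IsHomogeneous n)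
    (i : ℕ) : SqOp k i f = homogeneousComponent (n + i) (SqTotal k f) := by
  rw [sqOp_eq_sum_range (Nat.lt_succ_of_le hf.totalDegree_le),
    Finset.sum_eq_single_of_mem n (Finset.self_mem_range_succ n), homogeneousComponent_eq_self hf]
  intro d _ hd
  rw [homogeneousComponent_of_mem hf, if_neg hd, map_zero, map_zero]

lemma sqOp_zero (i : ℕ) : SqOp k i 0 = 0 := by
  rw [sqOp_of_isHomogeneous (isHomogeneous_zero _ _ 0), map_zero, map_zero]

lemma kamekoFun_sqOp_two_mul_of_isHomogeneous {f : MvPolynomial (Fin k) (ZMod 2)} {n : ℕ}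
    (hf : f.IsHomogeneous n) (t : ℕ) :
    kamekoFun k (SqOp k (2 * t) f) = SqOp k t (kamekoFun k f) := by
  rw [sqOp_of_isHomogeneous hf]
  by_cases hn : ∃ m, n = 2 * m + k
  · obtain ⟨m, rfl⟩ := hn
    rw [sqOp_of_isHomogeneous (isHomogeneous_kamekoFun hf), ← kamekoFun_sqTotal,
      show 2 * m + k + 2 * t = 2 * (m + t) + k by ring, kamekoFun_homogeneousComponent]
  · have hf0 := kamekoFun_eq_zero_of_isHomogeneous hf (not_exists.1 hn)
    rw [hf0, sqOp_zero, kamekoFun_homogeneousComponent_sqTotal_eq_zero hf0]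

lemma kamekoFun_sqOp_two_mul_add_one_of_isHomogeneous {f : MvPolynomial (Fin k) (ZMod 2)}
    {n : ℕ} (hf : f.IsHomogeneous n) (t : ℕ) : kamekoFun k (SqOp k (2 * t + 1) f) = 0 := by
  rw [sqOp_of_isHomogeneous hf]
  by_cases hn : ∃ m, n = 2 * m + k
  · obtain ⟨m, rfl⟩ := hn
    exact kamekoFun_homogeneousComponent_eq_zero (by omega) _
  · exact kamekoFun_homogeneousComponent_sqTotal_eq_zero
      (kamekoFun_eq_zero_of_isHomogeneous hf (not_exists.1 hn)) _

theorem kamekoFun_sqOp_two_mul (t : ℕ) (f : MvPolynomial (Fin k) (ZMod 2)) :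
    kamekoFun k (SqOp k (2 * t) f) = SqOp k t (kamekoFun k f) := by
  induction f using MvPolynomial.induction_on' with
  | add p q hp hq => rw [sqOp_add, kamekoFun_add, hp, hq, kamekoFun_add, sqOp_add]
  | monomial a c => exact kamekoFun_sqOp_two_mul_of_isHomogeneous (isHomogeneous_monomial c rfl) t

theorem kamekoFun_sqOp_two_mul_add_one (t : ℕ) (f : MvPolynomial (Fin k) (ZMod 2)) :
    kamekoFun k (SqOp k (2 * t + 1) f) = 0 := by
  induction f using MvPolynomial.induction_on' with
  | add p q hp hq => rw [sqOp_add, kamekoFun_add, hp, hq, add_zero]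
  | monomial a c =>
    exact kamekoFun_sqOp_two_mul_add_one_of_isHomogeneous (isHomogeneous_monomial c rfl) t

theorem hitSubmodule_le_comap_kameko : hitSubmodule k ≤ (hitSubmodule k).comap (kameko k) := by
  refine Submodule.span_le.2 ?_
  rintro _ ⟨i, f, hi, rfl⟩
  obtain ⟨t, rfl | rfl⟩ := Nat.even_or_odd' i
  · rw [SetLike.mem_coe, Submodule.mem_comap, kameko_apply, kamekoFun_sqOp_two_mul]
    exact Submodule.subset_span ⟨t, _, by omega, rfl⟩
  · rw [SetLike.mem_coe, Submodule.mem_comap, kameko_apply, kamekoFun_sqOp_two_mul_add_one]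
    exact zero_mem _

theorem exists_kameko_quotient_map (m : ℕ) : ∃ L : QP k (2 * m + k) →ₗ[ZMod 2] QP k m,
    ∀ (f : homogeneousSubmodule (Fin k) (ZMod 2) (2 * m + k))
      (g : homogeneousSubmodule (Fin k) (ZMod 2) m),
      (g : MvPolynomial (Fin k) (ZMod 2)) = kamekoFun k (f : MvPolynomial (Fin k) (ZMod 2)) →
      L (Submodule.Quotient.mk f) = Submodule.Quotient.mk g := by
  let φ := (kameko k).restrict (p := homogeneousSubmodule (Fin k) (ZMod 2) (2 * m + k))
    (q := homogeneousSubmodule (Fin k) (ZMod 2) m) fun _ hf => isHomogeneous_kamekoFun hf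
  have hφ : ∀ f, (φ f : MvPolynomial (Fin k) (ZMod 2)) = kamekoFun k f := fun _ => rfl
  refine ⟨Submodule.mapQ _ _ φ fun f hf => ?_, fun f g hg => ?_⟩
  · rw [Submodule.mem_comap, Submodule.mem_comap, Submodule.coe_subtype, hφ]
    exact hitSubmodule_le_comap_kameko hf
  · rw [Submodule.mapQ_apply]
    exact congrArg _ (Subtype.ext hg.symm)

end Kameko

open Kameko in
/-- `Sq̃ ∘ Sq^{2t} = Sq^t ∘ Sq̃` and `Sq̃ ∘ Sq^{2t+1} = 0`; consequently `Sq̃` carries hit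
polynomials to hit polynomials and maps `(P_k)_{2m+k}` into `(P_k)_m`, and hence induces
an `F_2`-linear map `Sq̃^0_* : (QP_k)_{2m+k} → (QP_k)_m` (Kameko's homomorphism). -/
theorem stmt3 (k : ℕ) :
    (∀ (t : ℕ) (f : MvPolynomial (Fin k) (ZMod 2)),
        kamekoFun k (SqOp k (2 * t) f) = SqOp k t (kamekoFun k f)) ∧
    (∀ (t : ℕ) (f : MvPolynomial (Fin k) (ZMod 2)),
        kamekoFun k (SqOp k (2 * t + 1) f) = 0) ∧
    (∀ f, IsHit k f → IsHit k (kamekoFun k f)) ∧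
    (∀ m : ℕ, ∀ f ∈ homogeneousSubmodule (Fin k) (ZMod 2) (2 * m + k),
        kamekoFun k f ∈ homogeneousSubmodule (Fin k) (ZMod 2) m) ∧
    (∀ m : ℕ, ∃ L : QP k (2 * m + k) →ₗ[ZMod 2] QP k m,
        ∀ (f : homogeneousSubmodule (Fin k) (ZMod 2) (2 * m + k))
          (g : homogeneousSubmodule (Fin k) (ZMod 2) m),
          (g : MvPolynomial (Fin k) (ZMod 2)) =
              kamekoFun k (f : MvPolynomial (Fin k) (ZMod 2)) →
          L (Submodule.Quotient.mk f) = Submodule.Quotient.mk g) :=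
  ⟨kamekoFun_sqOp_two_mul, kamekoFun_sqOp_two_mul_add_one,
    fun _ hf => hitSubmodule_le_comap_kameko hf, fun _ _ hf => isHomogeneous_kamekoFun hf,
    exists_kameko_quotient_map⟩
end

section
/- Let x be an admissible monomial in P_k. (i) If ω_{i_0}(x) = 0 for some index i_0 ≥ 1, then ω_i(x) = 0 for all i > i_0. (ii) If ω_{i_0}(x) < k for some index i_0 ≥ 1, then ω_i(x) < k for all i > i_0. -/
open MvPolynomial

/-- `ω_{i+1}(x)` for the monomial with exponent vector `a`: the number of variables whose
exponent has `i`-th binary digit equal to `1`. -/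
def wvec (k : ℕ) (a : Fin k →₀ ℕ) (i : ℕ) : ℕ :=
  (Finset.univ.filter fun j : Fin k => Nat.testBit (a j) i).card

/-- Left lexicographic strict order on weight vectors. -/
def wlt (u v : ℕ → ℕ) : Prop := ∃ i, (∀ j, j < i → u j = v j) ∧ u i < v i

/-- Left lexicographic order on the exponent vectors themselves, and the order `x < y`
on monomials of the same degree: either `ω(x) < ω(y)` lexicographically, or
`ω(x) = ω(y)` and `(ν_1(x), …, ν_k(x))` precedes `(ν_1(y), …, ν_k(y))`
lexicographically. -/
def monLT (k : ℕ) (a b : Fin k →₀ ℕ) : Prop :=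
  wlt (wvec k a) (wvec k b) ∨
    ((∀ i, wvec k a i = wvec k b i) ∧ ∃ j : Fin k, (∀ i, i < j → a i = b i) ∧ a j < b j)

/-- A monomial (given by its exponent vector `a`) is inadmissible: there are monomials
`y_1, …, y_t` of the same degree with `y_j < x` such that `x - (y_1 + … + y_t)` is hit. -/
def Inadmissible (k : ℕ) (a : Fin k →₀ ℕ) : Prop :=
  ∃ (t : ℕ) (y : Fin t → (Fin k →₀ ℕ)),
    (∀ j, (∑ i : Fin k, y j i) = ∑ i : Fin k, a i) ∧
    (∀ j, monLT k (y j) a) ∧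
    IsHit k (MvPolynomial.monomial a (1 : ZMod 2) +
      ∑ j, MvPolynomial.monomial (y j) (1 : ZMod 2))

/-- A monomial is admissible if it is not inadmissible. -/
def Admissible (k : ℕ) (a : Fin k →₀ ℕ) : Prop := ¬ Inadmissible k a

/-!
Write `ω'_r = ω_{r+1}` for the weight at binary digit `r` (this is `wvec k a r`). If
`ω'_r(x) = 0 < ω'_{r+1}(x)` or `ω'_r(x) < k = ω'_{r+1}(x)`, some exponent `ν_{j₀}(x)` has digits
`0` at `r` and `1` at `r + 1`, so `x = y · x_{j₀}^{2^r}` where `ν_{j₀}(y)` has digits `1` at `r`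
and `0` at `r + 1`. By the Cartan formula and Lucas' theorem, `Sq^{2^r}(y)` is the sum of the
monomials `y · ∏ x_j^{p_j}` with `Σ p_j = 2^r` and every `p_j` a binary submask of `ν_j(y)`.
One of them is `x`; every other one has a strictly smaller weight vector than `x`. Indeed, adding
such a `p_j` to `ν_j(y)` leaves the digits below the lowest digit `w` of `p` unchanged and clears
digit `w`, so the weight drops at `w` when `w < r`. When `w = r`, that is `p = 2^r e_{j₁}` with
`j₁ ≠ j₀`, the weights agree up to digit `r`; digit `r` of `ν_{j₁}(x)` is `1`, which rules out
`ω'_r(x) = 0`, so `ω'_{r+1}(x) = k`, while the other monomial has digit `0` at `r + 1` in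
position `j₀`. Hence `x` is inadmissible.
-/

namespace Nat

theorem mod_two_pow_eq_zero_of_testBit_eq_false {s w : ℕ} (hs : ∀ i < w, s.testBit i = false) :
    s % 2 ^ w = 0 :=
  Nat.eq_of_testBit_eq fun i => by
    rw [Nat.testBit_mod_two_pow, Nat.zero_testBit]
    by_cases hi : i < w <;> simp [hi, hs]

theorem testBit_add_of_lt {n s w i : ℕ} (hs : ∀ i < w, s.testBit i = false) (hi : i < w) :
    (n + s).testBit i = n.testBit i := by
  have hmod : (n + s) % 2 ^ w = n % 2 ^ w := by
    rw [Nat.add_mod, mod_two_pow_eq_zero_of_testBit_eq_false hs, add_zero, Nat.mod_mod]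
  simpa [hi] using congrArg (·.testBit i) hmod

theorem testBit_add_eq_xor {n s w : ℕ} (hs : ∀ i < w, s.testBit i = false) :
    (n + s).testBit w = (n.testBit w ^^ s.testBit w) := by
  have hs' : s = 2 ^ w * (s / 2 ^ w) := (Nat.mul_div_cancel'
    (Nat.dvd_of_mod_eq_zero (mod_two_pow_eq_zero_of_testBit_eq_false hs))).symm
  rw [add_comm, hs', Nat.testBit_mul_two_pow_add_eq, Nat.testBit_two_pow_mul]
  simp [Nat.testBit_zero, Bool.xor_comm]

theorem testBit_of_testBit_add_two_pow {n r : ℕ} (h0 : (n + 2 ^ r).testBit r = false)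
    (h1 : (n + 2 ^ r).testBit (r + 1) = true) :
    n.testBit r = true ∧ n.testBit (r + 1) = false := by
  simp only [Nat.testBit_eq_decide_div_mod_eq, pow_succ, ← Nat.div_div_eq_div_mul,
    Nat.add_div_right _ (Nat.two_pow_pos r), decide_eq_true_eq, decide_eq_false_iff_not] at *
  omega

theorem forall_testBit_imp_iff {n t : ℕ} :
    (∀ i, t.testBit i = true → n.testBit i = true) ↔
      (t % 2 = 1 → n % 2 = 1) ∧ ∀ i, (t / 2).testBit i = true → (n / 2).testBit i = true := by
  constructor
  · intro h
    exact ⟨fun ht => by simpa using h 0 (by simpa using ht),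
      fun i hi => by simpa [Nat.testBit_add_one] using h (i + 1) (by simpa [Nat.testBit_add_one])⟩
  · rintro ⟨h0, hs⟩ (_ | i) hi
    · simpa using h0 (by simpa using hi)
    · simpa [Nat.testBit_add_one] using hs i (by simpa [Nat.testBit_add_one] using hi)

end Nat

/-- Lucas' theorem modulo `2`. -/
theorem ZMod.natCast_choose_ne_zero_iff_testBit {n t : ℕ} :
    ((n.choose t : ℕ) : ZMod 2) ≠ 0 ↔ ∀ i, t.testBit i = true → n.testBit i = true := by
  induction n using Nat.strong_induction_on generalizing t with
  | _ n ih =>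
    rcases Nat.eq_zero_or_pos n with rfl | hn
    · rcases Nat.eq_zero_or_pos t with rfl | ht
      · simp
      · simp only [Nat.choose_eq_zero_of_lt ht, Nat.cast_zero, ne_eq, not_true_eq_false,
          Nat.zero_testBit, false_iff, not_forall]
        obtain ⟨i, hi⟩ := Nat.exists_testBit_of_ne_zero ht.ne'
        exact ⟨i, by simp [hi]⟩
    have hlucas : ((n.choose t : ℕ) : ZMod 2) =
        ((n % 2).choose (t % 2) : ZMod 2) * ((n / 2).choose (t / 2) : ZMod 2) := by
      rw [← Nat.cast_mul, ZMod.natCast_eq_natCast_iff]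
      exact Choose.choose_modEq_choose_mod_mul_choose_div_nat
    have hlow : ((n % 2).choose (t % 2) : ZMod 2) ≠ 0 ↔ (t % 2 = 1 → n % 2 = 1) := by
      rcases Nat.mod_two_eq_zero_or_one n with h | h <;>
        rcases Nat.mod_two_eq_zero_or_one t with h' | h' <;> simp [h, h']
    rw [hlucas, mul_ne_zero_iff, hlow, ih (n / 2) (by omega)]
    exact Nat.forall_testBit_imp_iff.symm

theorem Finsupp.testBit_single_two_pow_apply {ι : Type*} [DecidableEq ι] (j j' : ι) (r i : ℕ) :
    (Finsupp.single j (2 ^ r) j').testBit i = (decide (j = j') && decide (r = i)) := by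
  by_cases h : j = j' <;> simp [h, Nat.testBit_two_pow]

theorem Finsupp.testBit_single_two_pow_of_lt {ι : Type*} (j j' : ι) {r i : ℕ} (hi : i < r) :
    (Finsupp.single j (2 ^ r) j').testBit i = false := by
  classical
  simp [Finsupp.testBit_single_two_pow_apply, hi.ne']

theorem Finsupp.eq_single_of_sum_eq_of_le {ι : Type*} [Fintype ι] [DecidableEq ι] {p : ι →₀ ℕ}
    {n : ℕ} {i : ι} (hsum : ∑ j, p j = n) (hle : n ≤ p i) : p = Finsupp.single i n := by
  ext j
  have hsplit := Finset.add_sum_erase Finset.univ p (Finset.mem_univ i)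
  by_cases hj : j = i
  · subst hj
    simp only [Finsupp.single_eq_same]
    omega
  · have hrest : ∑ x ∈ Finset.univ.erase i, p x = 0 := by omega
    rw [Finsupp.single_apply, if_neg (Ne.symm hj)]
    exact Finset.sum_eq_zero_iff.mp hrest j (by simp [hj])

section WeightVector

variable {k : ℕ}

theorem wvec_eq_card_iff {a : Fin k →₀ ℕ} {i : ℕ} :
    wvec k a i = k ↔ ∀ j, (a j).testBit i = true := by
  have hcard : wvec k a i = Fintype.card (Fin k) ↔ _ := Finset.card_eq_iff_eq_univ _
  rw [Fintype.card_fin] at hcard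
  rw [hcard, Finset.filter_eq_self]
  simp

theorem wvec_le (a : Fin k →₀ ℕ) (i : ℕ) : wvec k a i ≤ k :=
  (Finset.card_filter_le _ _).trans_eq (Finset.card_fin k)

theorem wvec_lt_iff {a : Fin k →₀ ℕ} {i : ℕ} :
    wvec k a i < k ↔ ∃ j, (a j).testBit i = false := by
  rw [(wvec_le a i).lt_iff_ne, Ne, wvec_eq_card_iff]
  simp

theorem wvec_eq_zero_iff {a : Fin k →₀ ℕ} {i : ℕ} :
    wvec k a i = 0 ↔ ∀ j, (a j).testBit i = false := by
  simp [wvec, Finset.filter_eq_empty_iff]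

theorem wvec_add_of_lt {b q : Fin k →₀ ℕ} {w i : ℕ} (hq : ∀ j, ∀ i < w, (q j).testBit i = false)
    (hi : i < w) : wvec k (b + q) i = wvec k b i := by
  simp only [wvec, Finsupp.add_apply, Nat.testBit_add_of_lt (hq _) hi]

theorem wvec_add_add_wvec {b q : Fin k →₀ ℕ} {w : ℕ} (hq : ∀ j, ∀ i < w, (q j).testBit i = false)
    (hsub : ∀ j, (q j).testBit w = true → (b j).testBit w = true) :
    wvec k (b + q) w + wvec k q w = wvec k b w := by
  have hfilter : (Finset.univ.filter fun j => (b j).testBit w = true).filter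
      (fun j => (q j).testBit w = true) = Finset.univ.filter fun j => (q j).testBit w = true := by
    rw [Finset.filter_filter]
    exact Finset.filter_congr fun j _ => ⟨And.right, fun h => ⟨hsub j h, h⟩⟩
  have hdiff : (Finset.univ.filter fun j => (b j).testBit w = true).filter
      (fun j => ¬(q j).testBit w = true) =
        Finset.univ.filter fun j => ((b + q) j).testBit w = true := by
    rw [Finset.filter_filter]
    refine Finset.filter_congr fun j _ => ?_
    rw [Finsupp.add_apply, Nat.testBit_add_eq_xor (hq j)]
    have := hsub j
    revert this
    cases (b j).testBit w <;> cases (q j).testBit w <;> simp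
  rw [wvec, wvec, wvec, ← hfilter, ← hdiff, add_comm, Finset.card_filter_add_card_filter_not]

theorem wvec_single_two_pow (j : Fin k) (r i : ℕ) :
    wvec k (Finsupp.single j (2 ^ r)) i = if r = i then 1 else 0 := by
  by_cases h : r = i <;> simp [wvec, Finsupp.testBit_single_two_pow_apply, h, Finset.filter_eq]

theorem wvec_add_single_two_pow_add_one {b : Fin k →₀ ℕ} {r : ℕ} {j : Fin k}
    (hb : (b j).testBit r = true) : wvec k (b + Finsupp.single j (2 ^ r)) r + 1 = wvec k b r := by
  have h := wvec_add_add_wvec (fun j' _ => Finsupp.testBit_single_two_pow_of_lt j j')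
    (fun j' h => by simp [Finsupp.testBit_single_two_pow_apply] at h; exact h ▸ hb)
  rwa [wvec_single_two_pow, if_pos rfl] at h

theorem wlt_wvec_add_of_testBit {b p q : Fin k →₀ ℕ} {w : ℕ} {j₁ : Fin k}
    (hp : ∀ j, ∀ i < w, (p j).testBit i = false) (hq : ∀ j, ∀ i < w, (q j).testBit i = false)
    (hqw : ∀ j, (q j).testBit w = false)
    (hsub : ∀ j, (p j).testBit w = true → (b j).testBit w = true)
    (hj₁ : (p j₁).testBit w = true) :
    wlt (wvec k (b + p)) (wvec k (b + q)) := by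
  refine ⟨w, fun i hi => (wvec_add_of_lt hp hi).trans (wvec_add_of_lt hq hi).symm, ?_⟩
  have hbp := wvec_add_add_wvec hp hsub
  have hbq := wvec_add_add_wvec (b := b) hq (fun j h => by simp [hqw j] at h)
  have hq0 : wvec k q w = 0 := wvec_eq_zero_iff.mpr hqw
  have hp0 : wvec k p w ≠ 0 := fun h => by simp [wvec_eq_zero_iff.mp h j₁] at hj₁
  omega

theorem wlt_wvec_add_single_of_ne {b : Fin k →₀ ℕ} {r : ℕ} {j₀ j₁ : Fin k} (hj : j₁ ≠ j₀)
    (hb₀ : (b j₀).testBit r = true) (hb₀' : (b j₀).testBit (r + 1) = false)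
    (hb₁ : (b j₁).testBit r = true)
    (hall : wvec k (b + Finsupp.single j₀ (2 ^ r)) (r + 1) = k) :
    wlt (wvec k (b + Finsupp.single j₁ (2 ^ r))) (wvec k (b + Finsupp.single j₀ (2 ^ r))) := by
  refine ⟨r + 1, fun i hi => ?_, ?_⟩
  · rcases (Nat.lt_succ_iff.mp hi).lt_or_eq with hi | rfl
    · rw [wvec_add_of_lt (fun j' _ => Finsupp.testBit_single_two_pow_of_lt j₁ j') hi,
        wvec_add_of_lt (fun j' _ => Finsupp.testBit_single_two_pow_of_lt j₀ j') hi]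
    · have h₁ := wvec_add_single_two_pow_add_one hb₁
      have h₀ := wvec_add_single_two_pow_add_one hb₀
      omega
  · rw [hall, wvec_lt_iff]
    exact ⟨j₀, by simp [hj, hb₀']⟩

theorem wlt_wvec_add_of_submask {b p : Fin k →₀ ℕ} {r : ℕ} {j₀ : Fin k}
    (hb₀ : (b j₀).testBit r = true) (hb₀' : (b j₀).testBit (r + 1) = false)
    (hω : wvec k (b + Finsupp.single j₀ (2 ^ r)) r = 0 ∨
      wvec k (b + Finsupp.single j₀ (2 ^ r)) (r + 1) = k)
    (hsub : ∀ j i, (p j).testBit i = true → (b j).testBit i = true)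
    (hsum : ∑ j, p j = 2 ^ r) (hne : p ≠ Finsupp.single j₀ (2 ^ r)) :
    wlt (wvec k (b + p)) (wvec k (b + Finsupp.single j₀ (2 ^ r))) := by
  have hex : ∃ w j, (p j).testBit w = true := by
    obtain ⟨j, hj⟩ : ∃ j, p j ≠ 0 := by
      by_contra! h
      simp only [h, Finset.sum_const_zero] at hsum
      exact (Nat.two_pow_pos r).ne hsum
    obtain ⟨w, hw⟩ := Nat.exists_testBit_of_ne_zero hj
    exact ⟨w, j, hw⟩
  obtain ⟨j₁, hj₁⟩ := Nat.find_spec hex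
  have hlow : ∀ j, ∀ i < Nat.find hex, (p j).testBit i = false := fun j i hi => by
    simpa using not_exists.mp (Nat.find_min hex hi) j
  have hp_le : p j₁ ≤ 2 ^ r :=
    hsum ▸ Finset.single_le_sum (fun _ _ => Nat.zero_le _) (Finset.mem_univ j₁)
  have hwr : Nat.find hex ≤ r :=
    (Nat.pow_le_pow_iff_right (by norm_num)).mp ((Nat.ge_two_pow_of_testBit hj₁).trans hp_le)
  rcases hwr.lt_or_eq with hwr | hwr
  · exact wlt_wvec_add_of_testBit hlow
      (fun j i hi => Finsupp.testBit_single_two_pow_of_lt j₀ j (hi.trans hwr))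
      (fun j => by simp [Finsupp.testBit_single_two_pow_apply, hwr.ne']) (fun j => hsub j _) hj₁
  · rw [hwr] at hj₁
    obtain rfl : p = Finsupp.single j₁ (2 ^ r) :=
      Finsupp.eq_single_of_sum_eq_of_le hsum (Nat.ge_two_pow_of_testBit hj₁)
    have hj : j₁ ≠ j₀ := fun h => hne (h ▸ rfl)
    have hb₁ : (b j₁).testBit r = true := hsub j₁ r hj₁
    have hall := hω.resolve_left fun h => by
      simpa [Finsupp.single_apply, hj.symm, hb₁] using wvec_eq_zero_iff.mp h j₁
    exact wlt_wvec_add_single_of_ne hj hb₀ hb₀' hb₁ hall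

end WeightVector

theorem MvPolynomial.sum_support_monomial_one {σ : Type*} (f : MvPolynomial σ (ZMod 2)) :
    ∑ μ ∈ f.support, monomial μ (1 : ZMod 2) = f := by
  have hunit : ∀ x : ZMod 2, x ≠ 0 → x = 1 := by decide
  conv_rhs => rw [← support_sum_monomial_coeff f]
  exact Finset.sum_congr rfl fun μ hμ => by rw [hunit _ (mem_support_iff.mp hμ)]

section SteenrodSquare

variable {k : ℕ}

theorem sqTotal_X_pow (j : Fin k) (n : ℕ) :
    SqTotal k (X j ^ n) = ∑ t ∈ Finset.range (n + 1),
      monomial (Finsupp.single j (n + t)) ((n.choose t : ℕ) : ZMod 2) := by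
  rw [map_pow, SqTotal, aeval_X, add_comm, add_pow]
  refine Finset.sum_congr rfl fun t ht => ?_
  have ht : t ≤ n := Nat.lt_succ_iff.mp (Finset.mem_range.mp ht)
  rw [← pow_mul, ← pow_add, show 2 * t + (n - t) = n + t by omega, X_pow_eq_monomial,
    ← C_eq_coe_nat, mul_comm, C_mul_monomial, mul_one]

theorem sqTotal_monomial_one (b : Fin k →₀ ℕ) :
    SqTotal k (monomial b 1) =
      ∑ p ∈ Fintype.piFinset fun j => Finset.range (b j + 1),
        monomial (b + Finsupp.equivFunOnFinite.symm p) (∏ j, ((b j).choose (p j) : ZMod 2)) := by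
  rw [← prod_X_pow_eq_monomial, Finset.prod_subset (Finset.subset_univ _) fun j _ hj => by
    rw [Finsupp.notMem_support_iff.mp hj, pow_zero], map_prod]
  simp_rw [sqTotal_X_pow]
  rw [Finset.prod_univ_sum]
  refine Finset.sum_congr rfl fun p _ => ?_
  have hexp : ∑ j, Finsupp.single j (b j + p j) = b + Finsupp.equivFunOnFinite.symm p := by
    ext i
    simp [Finsupp.finsetSum_apply, Finsupp.single_apply, ← ite_add_zero]
  rw [← monomial_sum_prod, hexp]

theorem coeff_sqTotal_monomial_one (b μ : Fin k →₀ ℕ) :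
    coeff μ (SqTotal k (monomial b 1)) =
      if b ≤ μ then ∏ j, ((b j).choose ((μ - b) j) : ZMod 2) else 0 := by
  rw [sqTotal_monomial_one, coeff_sum]
  simp only [coeff_monomial]
  split_ifs with hle
  · obtain ⟨p, rfl⟩ := exists_add_of_le hle
    have hiff : ∀ q : Fin k → ℕ, b + Finsupp.equivFunOnFinite.symm q = b + p ↔ q = ⇑p := fun q => by
      rw [add_right_inj, Equiv.symm_apply_eq]
      exact ⟨fun h => h ▸ rfl, fun h => h ▸ rfl⟩
    simp_rw [hiff, Finset.sum_ite_eq', add_tsub_cancel_left]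
    refine ite_eq_left_iff.mpr fun hp => ?_
    obtain ⟨j, hj⟩ : ∃ j, b j < p j := by simpa [Fintype.mem_piFinset, Nat.lt_succ_iff] using hp
    exact (Finset.prod_eq_zero (Finset.mem_univ j) (by simp [Nat.choose_eq_zero_of_lt hj])).symm
  · exact Finset.sum_eq_zero fun q _ => if_neg fun h => hle (le_self_add.trans_eq h)

theorem exists_add_submask_of_coeff_sqTotal_ne_zero {b μ : Fin k →₀ ℕ}
    (h : coeff μ (SqTotal k (monomial b 1)) ≠ 0) :
    ∃ p, μ = b + p ∧ ∀ j i, (p j).testBit i = true → (b j).testBit i = true := by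
  rw [coeff_sqTotal_monomial_one] at h
  split_ifs at h with hle
  · exact ⟨μ - b, (add_tsub_cancel_of_le hle).symm, fun j =>
      ZMod.natCast_choose_ne_zero_iff_testBit.mp
        (Finset.prod_ne_zero_iff.mp h j (Finset.mem_univ j))⟩
  · exact absurd rfl h

theorem coeff_add_single_sqTotal_ne_zero {b : Fin k →₀ ℕ} {j₀ : Fin k} {r : ℕ}
    (hb : (b j₀).testBit r = true) :
    coeff (b + Finsupp.single j₀ (2 ^ r)) (SqTotal k (monomial b 1)) ≠ 0 := by
  rw [coeff_sqTotal_monomial_one, if_pos le_self_add, add_tsub_cancel_left,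
    Finset.prod_eq_single j₀ (fun j _ hj => by simp [Ne.symm hj])
      (fun h => absurd (Finset.mem_univ j₀) h), Finsupp.single_eq_same,
    ZMod.natCast_choose_ne_zero_iff_testBit]
  intro i hi
  rw [Nat.testBit_two_pow, decide_eq_true_eq] at hi
  exact hi ▸ hb

theorem sqOp_monomial_one (i : ℕ) (b : Fin k →₀ ℕ) :
    SqOp k i (monomial b 1) = homogeneousComponent (b.degree + i) (SqTotal k (monomial b 1)) := by
  have hhom : monomial b (1 : ZMod 2) ∈ homogeneousSubmodule (Fin k) (ZMod 2) b.degree :=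
    isHomogeneous_monomial 1 rfl
  rw [SqOp, totalDegree_monomial _ one_ne_zero]
  change ∑ d ∈ Finset.range (b.degree + 1), _ = _
  rw [Finset.sum_eq_single_of_mem b.degree
    (Finset.self_mem_range_succ _), homogeneousComponent_of_mem hhom, if_pos rfl]
  intro d _ hd
  rw [homogeneousComponent_of_mem hhom, if_neg hd, map_zero, map_zero]

end SteenrodSquare

section Admissible

variable {k : ℕ}

theorem inadmissible_of_isHit {a : Fin k →₀ ℕ} {f : MvPolynomial (Fin k) (ZMod 2)}
    (hf : IsHit k f) (ha : a ∈ f.support) (hdeg : ∀ μ ∈ f.support, μ.degree = a.degree)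
    (hlt : ∀ μ ∈ f.support, μ ≠ a → monLT k μ a) : Inadmissible k a := by
  let e := (f.support.erase a).equivFin
  refine ⟨(f.support.erase a).card, fun i => e.symm i, fun i => ?_, fun i => ?_, ?_⟩
  · simpa only [Finsupp.degree_eq_sum] using hdeg _ (Finset.mem_of_mem_erase (e.symm i).2)
  · exact hlt _ (Finset.mem_of_mem_erase (e.symm i).2) (Finset.ne_of_mem_erase (e.symm i).2)
  · rwa [Equiv.sum_comp e.symm (fun μ => monomial (μ : Fin k →₀ ℕ) (1 : ZMod 2)),
      Finset.sum_coe_sort _ (fun μ => monomial μ (1 : ZMod 2)),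
      Finset.add_sum_erase _ (fun μ => monomial μ (1 : ZMod 2)) ha, sum_support_monomial_one]

theorem inadmissible_of_testBit {a : Fin k →₀ ℕ} {r : ℕ} {j₀ : Fin k}
    (h0 : (a j₀).testBit r = false) (h1 : (a j₀).testBit (r + 1) = true)
    (hω : wvec k a r = 0 ∨ wvec k a (r + 1) = k) :
    Inadmissible k a := by
  obtain ⟨b, rfl⟩ : ∃ b, a = b + Finsupp.single j₀ (2 ^ r) := by
    refine ⟨a - Finsupp.single j₀ (2 ^ r), (tsub_add_cancel_of_le ?_).symm⟩
    rw [Finsupp.single_le_iff]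
    exact (Nat.pow_le_pow_right two_pos r.le_succ).trans (Nat.ge_two_pow_of_testBit h1)
  obtain ⟨hb₀, hb₀'⟩ := Nat.testBit_of_testBit_add_two_pow (by simpa using h0) (by simpa using h1)
  have hcoeff (μ : Fin k →₀ ℕ) : coeff μ (SqOp k (2 ^ r) (monomial b 1)) =
      if μ.degree = b.degree + 2 ^ r then coeff μ (SqTotal k (monomial b 1)) else 0 := by
    rw [sqOp_monomial_one, coeff_homogeneousComponent]
  have hdeg : (b + Finsupp.single j₀ (2 ^ r)).degree = b.degree + 2 ^ r := by
    rw [map_add, Finsupp.degree_single]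
  have hsupp (μ) (hμ : μ ∈ (SqOp k (2 ^ r) (monomial b 1)).support) :
      μ.degree = b.degree + 2 ^ r ∧ coeff μ (SqTotal k (monomial b 1)) ≠ 0 := by
    rw [mem_support_iff, hcoeff] at hμ
    split_ifs at hμ with h
    · exact ⟨h, hμ⟩
    · exact absurd rfl hμ
  refine inadmissible_of_isHit (Submodule.subset_span ⟨2 ^ r, _, Nat.two_pow_pos r, rfl⟩)
    ?_ (fun μ hμ => (hsupp μ hμ).1.trans hdeg.symm) fun μ hμ hne => ?_
  · rw [mem_support_iff, hcoeff, if_pos hdeg]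
    exact coeff_add_single_sqTotal_ne_zero hb₀
  · obtain ⟨hμdeg, hμ⟩ := hsupp μ hμ
    obtain ⟨p, rfl, hsub⟩ := exists_add_submask_of_coeff_sqTotal_ne_zero hμ
    have hsum : ∑ j, p j = 2 ^ r := by
      rw [map_add] at hμdeg
      rw [← Finsupp.degree_eq_sum]
      omega
    exact Or.inl (wlt_wvec_add_of_submask hb₀ hb₀' hω hsub hsum fun h => hne (h ▸ rfl))

theorem wvec_succ_eq_zero_of_admissible {a : Fin k →₀ ℕ} (ha : Admissible k a) {r : ℕ}
    (hr : wvec k a r = 0) : wvec k a (r + 1) = 0 := by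
  by_contra hne
  obtain ⟨j₀, hj₀⟩ : ∃ j, (a j).testBit (r + 1) = true := by
    simpa [wvec_eq_zero_iff] using hne
  exact ha (inadmissible_of_testBit (wvec_eq_zero_iff.mp hr j₀) hj₀ (Or.inl hr))

theorem wvec_succ_lt_of_admissible {a : Fin k →₀ ℕ} (ha : Admissible k a) {r : ℕ}
    (hr : wvec k a r < k) : wvec k a (r + 1) < k := by
  by_contra hne
  have hfull : wvec k a (r + 1) = k := (wvec_le a _).antisymm (not_lt.mp hne)
  obtain ⟨j₀, hj₀⟩ := wvec_lt_iff.mp hr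
  exact ha (inadmissible_of_testBit hj₀ (wvec_eq_card_iff.mp hfull j₀) (Or.inr hfull))

end Admissible

/-- Proposition 2.10: let `x` be an admissible monomial in `P_k`.
(i) If `ω_{i_0}(x) = 0` then `ω_i(x) = 0` for all `i > i_0`.
(ii) If `ω_{i_0}(x) < k` then `ω_i(x) < k` for all `i > i_0`. -/
theorem stmt15 (k : ℕ) (a : Fin k →₀ ℕ) (ha : Admissible k a) :
    (∀ i₀, wvec k a i₀ = 0 → ∀ i, i₀ < i → wvec k a i = 0) ∧
    (∀ i₀, wvec k a i₀ < k → ∀ i, i₀ < i → wvec k a i < k) := by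
  constructor
  · intro i₀ h₀ i hi
    induction i, hi using Nat.le_induction with
    | base => exact wvec_succ_eq_zero_of_admissible ha h₀
    | succ i _ ih => exact wvec_succ_eq_zero_of_admissible ha ih
  · intro i₀ h₀ i hi
    induction i, hi using Nat.le_induction with
    | base => exact wvec_succ_lt_of_admissible ha h₀
    | succ i _ ih => exact wvec_succ_lt_of_admissible ha ih
end
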